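/- arXiv:2307.08086 — 4 statements merged into one kernel-verified Lean document; each statement's English description precedes it below -/
import Mathlib

section
/- Lightweight coreset sensitivity upper bound: for P ⊆ ℝ^d finite with mean μ = (1/n)Σ_{p∈P} p and any nonempty finite set C ⊆ ℝ^d, letting d(p,C) = min_{c∈C}‖p−c‖², each p ∈ P satisfies d(p,C)/Σ_{q∈P} d(q,C) ≤ 2‖p−μ‖²/Σ_{q∈P} d(q,C) + 2·d(μ,C)/Σ_{q∈P} d(q,C), and moreover d(μ,C) ≤ (2/n)Σ_{q∈P} d(q,C) + (2/n)Σ_{q∈P}‖q−μ‖². -/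
/-- Squared distance to the nearest center of a nonempty finite center set. -/
noncomputable def sqDistToSet {d : ℕ} (C : Finset (EuclideanSpace ℝ (Fin d)))
    (hC : C.Nonempty) (x : EuclideanSpace ℝ (Fin d)) : ℝ :=
  C.inf' hC (fun c => ‖x - c‖ ^ 2)

lemma sqDistToSet_nonneg {d : ℕ} (C : Finset (EuclideanSpace ℝ (Fin d)))
    (hC : C.Nonempty) (x : EuclideanSpace ℝ (Fin d)) : 0 ≤ sqDistToSet C hC x := by
  obtain ⟨c, hc, hcx⟩ := Finset.exists_mem_eq_inf' hC (fun c => ‖x - c‖ ^ 2)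
  rw [sqDistToSet, hcx]; positivity

lemma sqDist_relaxed {d : ℕ} (C : Finset (EuclideanSpace ℝ (Fin d)))
    (hC : C.Nonempty) (x y : EuclideanSpace ℝ (Fin d)) :
    sqDistToSet C hC x ≤ 2 * ‖x - y‖ ^ 2 + 2 * sqDistToSet C hC y := by
  obtain ⟨c, hc, hcy⟩ := Finset.exists_mem_eq_inf' hC (fun c => ‖y - c‖ ^ 2)
  have h1 : sqDistToSet C hC x ≤ ‖x - c‖ ^ 2 := Finset.inf'_le _ hc
  have h2 : ‖x - c‖ ≤ ‖x - y‖ + ‖y - c‖ := by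
    have := norm_sub_le_norm_sub_add_norm_sub x y c
    linarith
  have h3 : sqDistToSet C hC y = ‖y - c‖ ^ 2 := hcy
  nlinarith [norm_nonneg (x - c), norm_nonneg (x - y), norm_nonneg (y - c),
    sq_nonneg (‖x - y‖ - ‖y - c‖),
    mul_le_mul h2 h2 (norm_nonneg _) (by positivity)]

/-- lightweight coreset sensitivity upper bound: the relative
K-means cost of a point is bounded via the relaxed triangle inequality, and the
cost of the centroid is bounded by the average cost plus the average variance. -/
theorem lightweight_sensitivity_upper_bound {d : ℕ}
    (P : Finset (EuclideanSpace ℝ (Fin d))) (hP : P.Nonempty)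
    (n : ℕ) (hn : n = P.card)
    (μ : EuclideanSpace ℝ (Fin d)) (hμ : μ = (1 / (n : ℝ)) • ∑ p ∈ P, p)
    (C : Finset (EuclideanSpace ℝ (Fin d))) (hC : C.Nonempty) :
    (∀ p ∈ P,
      sqDistToSet C hC p / (∑ q ∈ P, sqDistToSet C hC q) ≤
        2 * ‖p - μ‖ ^ 2 / (∑ q ∈ P, sqDistToSet C hC q) +
        2 * sqDistToSet C hC μ / (∑ q ∈ P, sqDistToSet C hC q)) ∧
    sqDistToSet C hC μ ≤
      (2 / (n : ℝ)) * (∑ q ∈ P, sqDistToSet C hC q) +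
      (2 / (n : ℝ)) * (∑ q ∈ P, ‖q - μ‖ ^ 2) := by
  have hS : 0 ≤ ∑ q ∈ P, sqDistToSet C hC q :=
    Finset.sum_nonneg fun q _ => sqDistToSet_nonneg C hC q
  constructor
  · intro p hp
    rw [← add_div]
    rcases eq_or_lt_of_le hS with hS0 | hSpos
    · have hp0 : sqDistToSet C hC p = 0 := by
        have h1 : sqDistToSet C hC p ≤ ∑ q ∈ P, sqDistToSet C hC q :=
          Finset.single_le_sum (fun q _ => sqDistToSet_nonneg C hC q) hp
        have := sqDistToSet_nonneg C hC p
        linarith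
      rw [hp0, ← hS0]
      simp
    · gcongr
      exact sqDist_relaxed C hC p μ
  · have key : ∀ q ∈ P, sqDistToSet C hC μ ≤ 2 * ‖q - μ‖ ^ 2 + 2 * sqDistToSet C hC q :=
      fun q _ => by simpa [norm_sub_rev q μ] using sqDist_relaxed C hC μ q
    have hsum : (n : ℝ) * sqDistToSet C hC μ ≤
        2 * (∑ q ∈ P, ‖q - μ‖ ^ 2) + 2 * (∑ q ∈ P, sqDistToSet C hC q) := by
      have := Finset.sum_le_sum key
      simp only [Finset.sum_add_distrib, ← Finset.mul_sum, Finset.sum_const, hn,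
        nsmul_eq_mul] at this ⊢
      linarith
    have hnpos : (0 : ℝ) < n := by
      rw [hn]; exact_mod_cast Finset.card_pos.mpr hP
    rw [div_mul_eq_mul_div, div_mul_eq_mul_div, ← add_div,
      le_div_iff₀ hnpos, mul_comm]
    linarith
end

section
/- Total sensitivity bound for ℓ1-regression via ℓ1-SVD: under the hypotheses of the ℓ1-SVD sensitivity bound (‖ΣVᵀx‖₂ ≤ Σ_{p∈P̃} w(p)|pᵀx| ≤ √c‖ΣVᵀx‖₂ for all x, U(p) = pᵀ(ΣVᵀ)^{-1}), the sum of sensitivities satisfies Σ_{p∈P̃} sup_x w(p)|pᵀx|/Σ_{q∈P̃} w(q)|qᵀx| ≤ c^{3/2}. -/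
open Matrix

/-- total sensitivity bound for weighted ℓ1-regression via the
ℓ1-SVD: the sum over points of the sensitivities is at most `c^(3/2)`. -/
theorem l1svd_total_sensitivity_bound {c : ℕ}
    (Pt : Finset (Fin c → ℝ)) (w : (Fin c → ℝ) → ℝ) (hw : ∀ p ∈ Pt, 0 ≤ w p)
    (S : Matrix (Fin c) (Fin c) ℝ) (hSdiag : S.IsDiag)
    (hSnonneg : ∀ i j, 0 ≤ S i j) (hSrank : IsUnit S.det)
    (V : Matrix (Fin c) (Fin c) ℝ) (hV : V ∈ Matrix.orthogonalGroup (Fin c) ℝ)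
    (hsandwich : ∀ x : Fin c → ℝ,
      Real.sqrt (∑ i, ((S * Vᵀ).mulVec x i) ^ 2) ≤ ∑ p ∈ Pt, w p * |p ⬝ᵥ x| ∧
      (∑ p ∈ Pt, w p * |p ⬝ᵥ x|) ≤
        Real.sqrt c * Real.sqrt (∑ i, ((S * Vᵀ).mulVec x i) ^ 2)) :
    ∑ p ∈ Pt, sSup {r : ℝ | ∃ x : Fin c → ℝ,
        (∑ q ∈ Pt, w q * |q ⬝ᵥ x|) ≠ 0 ∧
        r = w p * |p ⬝ᵥ x| / ∑ q ∈ Pt, w q * |q ⬝ᵥ x|}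
      ≤ (c : ℝ) ^ ((3 : ℝ) / 2) := by
  classical
  set M : Matrix (Fin c) (Fin c) ℝ := S * Vᵀ with hMdef
  -- M is invertible
  have hVunit : IsUnit Vᵀ.det := by
    rw [Matrix.mem_orthogonalGroup_iff] at hV
    have h1 : V.det * Vᵀ.det = 1 := by
      have := congrArg Matrix.det hV
      simpa [Matrix.det_mul, Matrix.star_eq_conjTranspose] using this
    exact IsUnit.of_mul_eq_one _ (by rw [mul_comm] at h1; exact h1)
  have hMdet : IsUnit M.det := by
    rw [hMdef, Matrix.det_mul]; exact hSrank.mul hVunit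
  have hMinvM : M⁻¹ * M = 1 := Matrix.nonsing_inv_mul M hMdet
  have hMMinv : M * M⁻¹ = 1 := Matrix.mul_nonsing_inv M hMdet
  set U : (Fin c → ℝ) → Fin c → ℝ := fun p => Matrix.vecMul p M⁻¹ with hUdef
  -- key identity
  have hkey : ∀ (p x : Fin c → ℝ), U p ⬝ᵥ M.mulVec x = p ⬝ᵥ x := by
    intro p x
    rw [dotProduct_mulVec, hUdef]
    simp only [Matrix.vecMul_vecMul, hMinvM, Matrix.vecMul_one]
  -- Cauchy-Schwarz with abs
  have hCS : ∀ (a b : Fin c → ℝ),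
      |a ⬝ᵥ b| ≤ Real.sqrt (∑ i, a i ^ 2) * Real.sqrt (∑ i, b i ^ 2) := by
    intro a b
    have h1 := Finset.sum_mul_sq_le_sq_mul_sq Finset.univ a b
    have h2 : |a ⬝ᵥ b| = Real.sqrt ((∑ i, a i * b i) ^ 2) := by
      rw [Real.sqrt_sq_eq_abs]; rfl
    rw [h2, ← Real.sqrt_mul (by positivity)]
    exact Real.sqrt_le_sqrt h1
  -- ℓ2 ≤ ℓ1
  have hl21 : ∀ (a : Fin c → ℝ), Real.sqrt (∑ i, a i ^ 2) ≤ ∑ i, |a i| := by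
    intro a
    have h1 : ∑ i, a i ^ 2 = ∑ i, |a i| ^ 2 := by simp [sq_abs]
    rw [h1]
    calc Real.sqrt (∑ i, |a i| ^ 2)
        ≤ Real.sqrt ((∑ i, |a i|) ^ 2) :=
          Real.sqrt_le_sqrt (Finset.sum_sq_le_sq_sum_of_nonneg fun i _ => abs_nonneg _)
      _ = ∑ i, |a i| := Real.sqrt_sq (by positivity)
  -- each sensitivity is bounded
  have hbound : ∀ p ∈ Pt, sSup {r : ℝ | ∃ x : Fin c → ℝ,
        (∑ q ∈ Pt, w q * |q ⬝ᵥ x|) ≠ 0 ∧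
        r = w p * |p ⬝ᵥ x| / ∑ q ∈ Pt, w q * |q ⬝ᵥ x|}
      ≤ w p * Real.sqrt (∑ i, U p i ^ 2) := by
    intro p hp
    apply Real.sSup_le
    · rintro r ⟨x, hD, rfl⟩
      set D := ∑ q ∈ Pt, w q * |q ⬝ᵥ x| with hDdef
      have hDpos : 0 < D := by
        rcases lt_or_eq_of_le (le_trans (Real.sqrt_nonneg _) (hsandwich x).1) with h | h
        · exact h
        · exact absurd h.symm hD
      rw [div_le_iff₀ hDpos]
      calc w p * |p ⬝ᵥ x| = w p * |U p ⬝ᵥ M.mulVec x| := by rw [hkey]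
        _ ≤ w p * (Real.sqrt (∑ i, U p i ^ 2) * Real.sqrt (∑ i, M.mulVec x i ^ 2)) :=
            mul_le_mul_of_nonneg_left (hCS _ _) (hw p hp)
        _ ≤ w p * (Real.sqrt (∑ i, U p i ^ 2) * D) := by
            refine mul_le_mul_of_nonneg_left ?_ (hw p hp)
            exact mul_le_mul_of_nonneg_left (hsandwich x).1 (Real.sqrt_nonneg _)
        _ = w p * Real.sqrt (∑ i, U p i ^ 2) * D := by ring
    · exact mul_nonneg (hw p hp) (Real.sqrt_nonneg _)
  calc ∑ p ∈ Pt, sSup {r : ℝ | ∃ x : Fin c → ℝ,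
        (∑ q ∈ Pt, w q * |q ⬝ᵥ x|) ≠ 0 ∧
        r = w p * |p ⬝ᵥ x| / ∑ q ∈ Pt, w q * |q ⬝ᵥ x|}
      ≤ ∑ p ∈ Pt, w p * Real.sqrt (∑ i, U p i ^ 2) :=
        Finset.sum_le_sum hbound
    _ ≤ ∑ p ∈ Pt, w p * ∑ i, |U p i| := by
        refine Finset.sum_le_sum fun p hp => ?_
        exact mul_le_mul_of_nonneg_left (hl21 _) (hw p hp)
    _ = ∑ i, ∑ p ∈ Pt, w p * |p ⬝ᵥ (fun j => M⁻¹ j i)| := by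
        rw [Finset.sum_comm]
        refine Finset.sum_congr rfl fun p _ => ?_
        rw [Finset.mul_sum]
        refine Finset.sum_congr rfl fun i _ => ?_
        simp [hUdef, Matrix.vecMul, dotProduct]
    _ ≤ ∑ i : Fin c, Real.sqrt c := by
        refine Finset.sum_le_sum fun i _ => ?_
        have h2 := (hsandwich (fun j => M⁻¹ j i)).2
        have h3 : ∀ k, M.mulVec (fun j => M⁻¹ j i) k = (1 : Matrix (Fin c) (Fin c) ℝ) k i := by
          intro k
          rw [← hMMinv]
          simp [Matrix.mulVec, Matrix.mul_apply, dotProduct]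
        have h4 : ∑ k, M.mulVec (fun j => M⁻¹ j i) k ^ 2 = 1 := by
          simp only [h3, Matrix.one_apply]
          simp [ite_pow]
        rw [h4, Real.sqrt_one, mul_one] at h2
        exact h2
    _ = (c : ℝ) * Real.sqrt c := by simp [mul_comm]
    _ = (c : ℝ) ^ ((3 : ℝ) / 2) := by
        rw [show (c:ℝ) * Real.sqrt c = (c:ℝ)^(1:ℝ) * (c:ℝ)^((1:ℝ)/2) by
          rw [Real.rpow_one, Real.sqrt_eq_rpow],
          ← Real.rpow_add' (Nat.cast_nonneg c) (by norm_num)]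
        norm_num
end

section
/- The random Fourier feature map z(x) = √(2/D)(cos(ω₁ᵀx + b₁), …, cos(ω_Dᵀx + b_D)) is an unbiased estimator of a shift-invariant kernel: if ω is drawn from the Fourier transform probability density ρ of k and b uniformly on [0,2π], then E[2·cos(ωᵀx + b)·cos(ωᵀy + b)] = k(x,y) for every x,y, where k(x,y) = ∫ ρ(ω)cos(ωᵀ(x−y)) dω. -/
open MeasureTheory Real

theorem two_mul_cos_add_mul_cos_add (a a' b : ℝ) :
    2 * cos (a + b) * cos (a' + b) = cos (a - a') + cos (2 * b + (a + a')) := by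
  rw [cos_add_cos, show (a - a' + (2 * b + (a + a'))) / 2 = a + b by ring,
    show (a - a' - (2 * b + (a + a'))) / 2 = -(a' + b) by ring, cos_neg]

theorem integral_cos_two_mul_add_eq_zero (c : ℝ) :
    ∫ b in (0 : ℝ)..(2 * π), cos (2 * b + c) = 0 := by
  have hperiod : sin (2 * (2 * π) + c) = sin c := by
    simpa [add_comm, mul_comm] using sin_add_int_mul_two_pi c 2
  rw [intervalIntegral.integral_comp_mul_add cos two_ne_zero c, integral_cos, hperiod]
  simp

theorem average_two_mul_cos_add_mul_cos_add (a a' : ℝ) :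
    1 / (2 * π) * ∫ b in (0 : ℝ)..(2 * π), 2 * cos (a + b) * cos (a' + b) = cos (a - a') := by
  have hcos : Continuous fun b : ℝ => cos (2 * b + (a + a')) := by fun_prop
  simp_rw [two_mul_cos_add_mul_cos_add]
  rw [intervalIntegral.integral_add intervalIntegrable_const (hcos.intervalIntegrable _ _),
    intervalIntegral.integral_const, integral_cos_two_mul_add_eq_zero]
  field_simp
  ring

theorem random_fourier_features_unbiased_general {d : ℕ}
    (ρ : (Fin d → ℝ) → ℝ)
    (k : (Fin d → ℝ) → (Fin d → ℝ) → ℝ)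
    (hk : ∀ x y, k x y = ∫ ω : Fin d → ℝ, ρ ω * Real.cos (∑ i, ω i * (x i - y i)))
    (x y : Fin d → ℝ) :
    (∫ ω : Fin d → ℝ, ρ ω * ((1 / (2 * π)) *
        ∫ b in (0 : ℝ)..(2 * π),
          2 * Real.cos ((∑ i, ω i * x i) + b) * Real.cos ((∑ i, ω i * y i) + b)))
      = k x y := by
  rw [hk]
  congr 1 with ω
  rw [average_two_mul_cos_add_mul_cos_add, ← Finset.sum_sub_distrib]
  simp_rw [mul_sub]

/-- random Fourier features are unbiased. If `ρ` is a probability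
density on `ℝ^d` (the Fourier transform of the shift-invariant kernel `k`, by
Bochner's theorem) and `b` is uniform on `[0, 2π]`, then the expectation of
`2 cos(ωᵀx + b) cos(ωᵀy + b)` equals `k(x,y) = ∫ ρ(ω) cos(ωᵀ(x−y)) dω`. -/
theorem random_fourier_features_unbiased {d : ℕ}
    (ρ : (Fin d → ℝ) → ℝ) (hρ : ∀ ω, 0 ≤ ρ ω)
    (hρ1 : ∫ ω : Fin d → ℝ, ρ ω = 1)
    (k : (Fin d → ℝ) → (Fin d → ℝ) → ℝ)
    (hk : ∀ x y, k x y = ∫ ω : Fin d → ℝ, ρ ω * Real.cos (∑ i, ω i * (x i - y i)))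
    (x y : Fin d → ℝ) :
    (∫ ω : Fin d → ℝ, ρ ω * ((1 / (2 * π)) *
        ∫ b in (0 : ℝ)..(2 * π),
          2 * Real.cos ((∑ i, ω i * x i) + b) * Real.cos ((∑ i, ω i * y i) + b)))
      = k x y :=
  random_fourier_features_unbiased_general ρ k hk x y
end

section
/- Farthest-point (greedy K-center) gives a 2-approximation: let P ⊆ ℝ^d be finite and let the greedy algorithm pick c₁ ∈ P arbitrarily and iteratively c_{i+1} = argmax_{p∈P} min_{j≤i} ‖p − c_j‖ for i < K. Then the resulting set C of K centers satisfies max_{p∈P} min_{c∈C} ‖p−c‖ ≤ 2·OPT, where OPT = min over all K-subsets (or K-point sets) C' ⊆ ℝ^d of max_{p∈P} min_{c∈C'} ‖p−c‖. -/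
/-! If some point `p ∈ P` were farther than `2r` from every greedy center, then by the greedy
rule each new center was farther than `2r` from all earlier ones, so `p, c₀, …, c_{K-1}` are
`K + 1` points of `P` at pairwise distance `> 2r`. No ball of radius `r` contains two of them,
so they cannot be covered by `K` such balls. -/

section KCenter

variable {α : Type*} [PseudoMetricSpace α]

theorem card_le_card_of_pairwise_lt_dist_of_covered {ι κ : Type*} [Fintype ι] [Fintype κ]
    {f : ι → α} {C : κ → α} {r : ℝ} (hsep : Pairwise fun a b => 2 * r < dist (f a) (f b))
    (hcov : ∀ a, ∃ j, dist (f a) (C j) ≤ r) : Fintype.card ι ≤ Fintype.card κ := by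
  choose g hg using hcov
  refine Fintype.card_le_of_injective g fun a b hab => ?_
  by_contra hne
  have hclose : dist (f a) (f b) ≤ 2 * r :=
    calc dist (f a) (f b) ≤ dist (f a) (C (g a)) + dist (f b) (C (g a)) := dist_triangle_right _ _ _
      _ ≤ r + r := add_le_add (hg a) (hab ▸ hg b)
      _ = 2 * r := by ring
  exact (hsep hne).not_ge hclose

theorem lt_dist_of_greedy {ι : Type*} [LinearOrder ι] [LocallyFiniteOrderBot ι]
    {P : Finset α} {c : ι → α}
    (hgreedy : ∀ i : ι, ∀ hi : (Finset.Iio i).Nonempty, ∀ p ∈ P,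
      (Finset.Iio i).inf' hi (fun j => dist p (c j)) ≤
      (Finset.Iio i).inf' hi (fun j => dist (c i) (c j)))
    {p : α} (hp : p ∈ P) {s : ℝ} (hfar : ∀ k, s < dist p (c k)) {i j : ι} (hji : j < i) :
    s < dist (c i) (c j) := by
  have hj : j ∈ Finset.Iio i := Finset.mem_Iio.mpr hji
  calc s < (Finset.Iio i).inf' ⟨j, hj⟩ (fun k => dist p (c k)) :=
        (Finset.lt_inf'_iff _).mpr fun k _ => hfar k
    _ ≤ (Finset.Iio i).inf' ⟨j, hj⟩ (fun k => dist (c i) (c k)) := hgreedy i ⟨j, hj⟩ p hp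
    _ ≤ dist (c i) (c j) := Finset.inf'_le _ hj

theorem pairwise_lt_dist_optionElim {ι : Type*} [LinearOrder ι] {c : ι → α} {p : α} {s : ℝ}
    (hc : ∀ i j, j < i → s < dist (c i) (c j)) (hfar : ∀ k, s < dist p (c k)) :
    Pairwise fun a b : Option ι => s < dist (a.elim p c) (b.elim p c) := by
  rintro (_ | i) (_ | j) hne
  · exact absurd rfl hne
  · exact hfar j
  · exact dist_comm p (c i) ▸ hfar i
  · rcases lt_or_gt_of_ne (Option.some_injective _ |>.ne_iff.mp hne) with hij | hji
    · exact dist_comm (c j) (c i) ▸ hc j i hij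
    · exact hc i j hji

end KCenter

theorem greedy_kcenter_two_approx_general {d K : ℕ}
    (P : Finset (EuclideanSpace ℝ (Fin d)))
    (c : Fin K → EuclideanSpace ℝ (Fin d))
    (hcP : ∀ i, c i ∈ P)
    (hgreedy : ∀ i : Fin K, ∀ hi : (Finset.Iio i).Nonempty, ∀ p ∈ P,
      (Finset.Iio i).inf' hi (fun j => dist p (c j)) ≤
      (Finset.Iio i).inf' hi (fun j => dist (c i) (c j)))
    (r : ℝ)
    (C' : Fin K → EuclideanSpace ℝ (Fin d))
    (hopt : ∀ p ∈ P, ∃ j : Fin K, dist p (C' j) ≤ r) :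
    ∀ p ∈ P, ∃ i : Fin K, dist p (c i) ≤ 2 * r := by
  intro p hp
  by_contra! hfar
  have hsep := pairwise_lt_dist_optionElim
    (fun i j hji => lt_dist_of_greedy hgreedy hp hfar hji) hfar
  have hcov : ∀ a : Option (Fin K), ∃ j, dist (a.elim p c) (C' j) ≤ r := fun a =>
    hopt _ (by cases a <;> simp [hp, hcP])
  have hcard := card_le_card_of_pairwise_lt_dist_of_covered hsep hcov
  simp at hcard

/-- greedy farthest-point traversal is a 2-approximation for the
K-center problem. The greedy centers `c : Fin K → ℝ^d` all belong to `P`, and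
each `c i` maximizes, over `p ∈ P`, the minimum distance to previously chosen
centers. If some set of `K` centers `C'` covers `P` within radius `r` (in
particular the optimal one), then the greedy centers cover `P` within `2r`. -/
theorem greedy_kcenter_two_approx {d K : ℕ} (hK : 0 < K)
    (P : Finset (EuclideanSpace ℝ (Fin d))) (hP : P.Nonempty)
    (c : Fin K → EuclideanSpace ℝ (Fin d))
    (hcP : ∀ i, c i ∈ P)
    (hgreedy : ∀ i : Fin K, ∀ hi : (Finset.Iio i).Nonempty, ∀ p ∈ P,
      (Finset.Iio i).inf' hi (fun j => dist p (c j)) ≤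
      (Finset.Iio i).inf' hi (fun j => dist (c i) (c j)))
    (r : ℝ) (hr : 0 ≤ r)
    (C' : Fin K → EuclideanSpace ℝ (Fin d))
    (hopt : ∀ p ∈ P, ∃ j : Fin K, dist p (C' j) ≤ r) :
    ∀ p ∈ P, ∃ i : Fin K, dist p (c i) ≤ 2 * r :=
  greedy_kcenter_two_approx_general P c hcP hgreedy r C' hopt
end
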